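/- Let G be a group with a finite generating multiset S, and let H ≤ G be a subgroup of finite index with [G:H] ≥ |S|. If the quotient H / core_G(H) is a cyclic group, then S is Nielsen equivalent to a multiset contained in a left-right transversal of H in G. -/

import Mathlib

open scoped Classical

section Defs

variable {G : Type*} [Group G]

/-- A single Nielsen move on a finite multiset of group elements: replace one
occurrence of `g` by `g⁻¹`, or by `h * g` or `g * h` where `h` is another
occurrence in the multiset. -/
def NielsenMove (S T : Multiset G) : Prop :=
  (∃ g ∈ S, T = g⁻¹ ::ₘ S.erase g) ∨
    (∃ g ∈ S, ∃ h ∈ S.erase g, T = h * g ::ₘ S.erase g ∨ T = g * h ::ₘ S.erase g)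

/-- Nielsen equivalence: one multiset is obtained from the other by a finite
sequence of Nielsen moves. -/
def NielsenEquiv (S T : Multiset G) : Prop :=
  Relation.ReflTransGen NielsenMove S T

/-- The elements of the multiset `S` lie in pairwise distinct left cosets of `H`. -/
def LeftDistinct (H : Subgroup G) (S : Multiset G) : Prop :=
  (S.map fun x => ((x : G) : G ⧸ H)).Nodup

/-- The elements of the multiset `S` lie in pairwise distinct right cosets of `H`
(using that `Hx = Hy ↔ x⁻¹H = y⁻¹H`). -/
def RightDistinct (H : Subgroup G) (S : Multiset G) : Prop :=
  (S.map fun x => ((x⁻¹ : G) : G ⧸ H)).Nodup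

/-- `T` is a left transversal of `H`: it contains exactly one element of each
left coset of `H`. -/
def IsLeftTransversal (H : Subgroup G) (T : Set G) : Prop :=
  ∀ g : G, ∃! t, t ∈ T ∧ ((t : G) : G ⧸ H) = ((g : G) : G ⧸ H)

/-- `T` is a right transversal of `H`: it contains exactly one element of each
right coset of `H` (using that `Hx = Hy ↔ x⁻¹H = y⁻¹H`). -/
def IsRightTransversal (H : Subgroup G) (T : Set G) : Prop :=
  ∀ g : G, ∃! t, t ∈ T ∧ ((t⁻¹ : G) : G ⧸ H) = ((g⁻¹ : G) : G ⧸ H)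

/-- The left coset `aH` as a set. -/
def lcoset (a : G) (H : Subgroup G) : Set G := {x | a⁻¹ * x ∈ H}

/-- The right coset `Ha` as a set. -/
def rcoset (H : Subgroup G) (a : G) : Set G := {x | x * a⁻¹ ∈ H}

/-- The double coset `HgH` as a set. -/
def dcoset (H : Subgroup G) (g : G) : Set G := {x | ∃ h₁ ∈ H, ∃ h₂ ∈ H, x = h₁ * g * h₂}

/-- `S` is left-right clean relative to `H`: `S ∖ H` is nonempty and its elements
lie in pairwise distinct left cosets and pairwise distinct right cosets of `H`. -/
def LeftRightClean (H : Subgroup G) (S : Multiset G) : Prop :=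
  (∃ x ∈ S, x ∉ H) ∧
    LeftDistinct H (S.filter fun x => x ∉ H) ∧
    RightDistinct H (S.filter fun x => x ∉ H)

end Defs

/-!
Write `N` for the core of `H`. First Nielsen-reduce `S` so that its elements outside `H` lie in
pairwise distinct left and pairwise distinct right cosets of `H`, and at most one of them lies in
`H ∖ N`: two elements `a, b ∉ H` sharing a left (right) coset become `a, a⁻¹b` (`a, ba⁻¹`) with
`a⁻¹b ∈ H` (`ba⁻¹ ∈ H`), and two elements of `H ∖ N` become one of `H` and one of `N` by Euclid's
algorithm in the cyclic group `H/N`. Then, as long as two elements lie in `H`, one of them, `e`,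
lies in `N`; the others generate `G` modulo `N`, so Nielsen moves carry `e` into any coset of `N`,
in particular into a left and a right coset of `H` that no other element uses. Such a pair of
cosets exists because fewer than `[G:H]` elements remain: `HxH` contains as many left as right
cosets of `H`, and a left and a right coset inside the same double coset meet. The same count
extends the resulting multiset to a left-right transversal.
-/

namespace Multiset

variable {α β : Type*}

lemma exists_eq_cons_cons_of_one_lt_card_filter {p : α → Prop} [DecidablePred p] {S : Multiset α}
    (h : 1 < (S.filter p).card) : ∃ a b V, S = a ::ₘ b ::ₘ V ∧ p a ∧ p b := by
  obtain ⟨a, ha⟩ := card_pos_iff_exists_mem.1 (by omega : 0 < (S.filter p).card)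
  obtain ⟨W, hW⟩ := exists_cons_of_mem ha
  obtain ⟨b, hb⟩ := card_pos_iff_exists_mem.1 (by simp [hW] at h; omega : 0 < W.card)
  obtain ⟨W', rfl⟩ := exists_cons_of_mem hb
  obtain ⟨V, hV⟩ := le_iff_exists_add.1 (hW ▸ filter_le p S)
  refine ⟨a, b, W' + V, by simpa using hV, of_mem_filter ha, of_mem_filter (s := S) ?_⟩
  simp [hW]

lemma exists_eq_cons_cons_of_not_nodup_map_filter {p : α → Prop} [DecidablePred p]
    {f : α → β} {S : Multiset α} (h : ¬ ((S.filter p).map f).Nodup) :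
    ∃ a b V, S = a ::ₘ b ::ₘ V ∧ p a ∧ p b ∧ f a = f b := by
  classical
  obtain ⟨y, hy⟩ : ∃ y, 1 < ((S.filter p).map f).count y := by
    simpa [nodup_iff_count_le_one] using h
  rw [count_map, filter_filter] at hy
  obtain ⟨a, b, V, rfl, ⟨rfl, hpa⟩, hb, hpb⟩ := exists_eq_cons_cons_of_one_lt_card_filter hy
  exact ⟨a, b, V, rfl, hpa, hpb, hb⟩

lemma nodup_map_of_card_filter_le_one {p : α → Prop} [DecidablePred p] {f : α → β}
    {S : Multiset α} (hA : ((S.filter fun a => ¬ p a).map f).Nodup) (hB : (S.filter p).card ≤ 1)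
    (hdisj : ∀ a b, p a → ¬ p b → f a ≠ f b) : (S.map f).Nodup := by
  rw [← filter_add_not p S, map_add, nodup_add]
  refine ⟨?_, hA, ?_⟩
  · rw [nodup_iff_count_le_one]
    exact fun b => (count_le_card b _).trans (by rwa [card_map])
  · rw [disjoint_left]
    intro _ hy hy'
    obtain ⟨a, ha, rfl⟩ := mem_map.1 hy
    obtain ⟨b, hb, he⟩ := mem_map.1 hy'
    exact hdisj a b (of_mem_filter ha) (mem_filter.1 hb).2 he.symm

lemma exists_mem_notMem_map_of_card_filter_lt {s : Set β} (m : Multiset α)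
    (f : α → β) (h : (m.filter fun a => f a ∈ s).card < Nat.card s) : ∃ b ∈ s, b ∉ m.map f := by
  by_contra! hs
  have hsub : s ⊆ ↑((m.filter fun a => f a ∈ s).map f).toFinset := by
    intro b hb
    obtain ⟨a, ha, rfl⟩ := mem_map.1 (hs b hb)
    simpa using ⟨a, ⟨ha, hb⟩, rfl⟩
  have := (Set.ncard_le_ncard hsub).trans_eq (Set.ncard_coe_finset _)
  rw [← Nat.card_coe_set_eq] at this
  exact (this.trans (toFinset_card_le _)).not_gt (by rwa [card_map])

lemma existsUnique_of_nodup_map [Finite β] {f : α → β} {T : Multiset α}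
    (hT : (T.map f).Nodup) (hcard : Nat.card β ≤ T.card) (b : β) : ∃! a, a ∈ T ∧ f a = b := by
  let _ : Fintype β := Fintype.ofFinite β
  have himage : (T.map f).toFinset.card = Fintype.card β := by
    refine le_antisymm (Finset.card_le_univ _) ?_
    rwa [toFinset_card_of_nodup hT, card_map, ← Nat.card_eq_fintype_card]
  have hb : b ∈ (T.map f).toFinset := by
    rw [Finset.eq_univ_of_card _ himage]; exact Finset.mem_univ b
  obtain ⟨a, ha, rfl⟩ := mem_map.1 (mem_toFinset.1 hb)
  exact ⟨a, ⟨ha, rfl⟩, fun a' ⟨ha', he⟩ => inj_on_of_nodup_map hT _ ha' _ ha he⟩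

end Multiset

namespace Subgroup

variable {G : Type*} [Group G]

lemma relIndex_mul_index_comm (H K : Subgroup G) :
    H.relIndex K * K.index = K.relIndex H * H.index := by
  rw [← inf_relIndex_right, relIndex_mul_index inf_le_right, ← inf_relIndex_left,
    relIndex_mul_index inf_le_left]

lemma relIndex_comm_of_index_eq {H K : Subgroup G} [H.FiniteIndex] (h : H.index = K.index) :
    H.relIndex K = K.relIndex H := by
  have := relIndex_mul_index_comm H K
  rw [← h] at this
  exact Nat.eq_of_mul_eq_mul_right (Nat.pos_of_ne_zero FiniteIndex.index_ne_zero) this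

variable (H : Subgroup G)

open MulAction Pointwise

/- The `H`-orbit of `xH` in `G ⧸ H` is the set of left cosets of `H` in `HxH`. A right coset `Hy`
is represented by the left coset `y⁻¹H`, so the right cosets in `HxH` correspond to the orbit of
`x⁻¹H`. -/

lemma mem_orbit_mk_iff (x y : G) :
    (y : G ⧸ H) ∈ orbit H (x : G ⧸ H) ↔ ∃ h₁ ∈ H, ∃ h₂ ∈ H, y = h₁ * x * h₂ := by
  constructor
  · rintro ⟨⟨h, hh⟩, hy⟩
    have : ((h * x : G) : G ⧸ H) = y := hy
    rw [QuotientGroup.eq] at this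
    exact ⟨h, hh, _, this, by group⟩
  · rintro ⟨h₁, hh₁, h₂, hh₂, rfl⟩
    refine ⟨⟨h₁, hh₁⟩, ?_⟩
    show ((h₁ * x : G) : G ⧸ H) = _
    rw [QuotientGroup.eq]
    simpa [mul_assoc] using hh₂

lemma inv_mem_orbit_mk_inv_iff (x y : G) :
    ((y⁻¹ : G) : G ⧸ H) ∈ orbit H ((x⁻¹ : G) : G ⧸ H) ↔ (y : G ⧸ H) ∈ orbit H (x : G ⧸ H) := by
  have key : ∀ x y : G, (y : G ⧸ H) ∈ orbit H (x : G ⧸ H) →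
      ((y⁻¹ : G) : G ⧸ H) ∈ orbit H ((x⁻¹ : G) : G ⧸ H) := by
    intro x y hy
    obtain ⟨h₁, hh₁, h₂, hh₂, rfl⟩ := (mem_orbit_mk_iff H x y).1 hy
    exact (mem_orbit_mk_iff H _ _).2 ⟨h₂⁻¹, inv_mem hh₂, h₁⁻¹, inv_mem hh₁, by group⟩
  exact ⟨fun h => by simpa using key _ _ h, key x y⟩

lemma exists_mk_eq_and_mk_inv_eq {x : G} {l r : G ⧸ H} (hl : l ∈ orbit H (x : G ⧸ H))
    (hr : r ∈ orbit H ((x⁻¹ : G) : G ⧸ H)) :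
    ∃ z : G, (z : G ⧸ H) = l ∧ ((z⁻¹ : G) : G ⧸ H) = r := by
  obtain ⟨⟨h, hh⟩, rfl⟩ := hl
  obtain ⟨⟨k, hk⟩, rfl⟩ := hr
  refine ⟨h * x * k⁻¹, ?_, ?_⟩
  · show _ = ((h * x : G) : G ⧸ H)
    rw [QuotientGroup.eq]; simpa [mul_assoc] using hk
  · show _ = ((k * x⁻¹ : G) : G ⧸ H)
    rw [QuotientGroup.eq]; simpa [mul_assoc] using hh

lemma index_pointwise_smul {A : Type*} [Group A] [MulDistribMulAction A G] (a : A) :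
    (a • H).index = H.index := by
  rw [pointwise_smul_def]
  exact index_map_of_bijective (MulAction.bijective a) H

lemma stabilizer_mk_eq (x : G) :
    stabilizer H (x : G ⧸ H) = (ConjAct.toConjAct x • H).subgroupOf H := by
  ext ⟨h, hh⟩
  rw [mem_stabilizer_iff, mem_subgroupOf, mem_pointwise_smul_iff_inv_smul_mem]
  show ((h * x : G) : G ⧸ H) = x ↔ _
  rw [QuotientGroup.eq, ← inv_mem_iff (x := (h * x)⁻¹ * x)]
  simp [ConjAct.smul_def, mul_assoc]

lemma card_orbit_mk_inv [H.FiniteIndex] (x : G) :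
    Nat.card (orbit H ((x⁻¹ : G) : G ⧸ H)) = Nat.card (orbit H (x : G ⧸ H)) := by
  have card_orbit : ∀ y : G, Nat.card (orbit H (y : G ⧸ H)) =
      (ConjAct.toConjAct y • H).relIndex H := fun y => by
    rw [Nat.card_coe_set_eq, ← index_stabilizer, stabilizer_mk_eq]; rfl
  set g := ConjAct.toConjAct x
  have hinv : (g • H).relIndex H = H.relIndex (g⁻¹ • H) := by
    rw [← relIndex_pointwise_smul g⁻¹, inv_smul_smul]
  rw [card_orbit, card_orbit, hinv, map_inv,
    relIndex_comm_of_index_eq (index_pointwise_smul H g⁻¹).symm]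

lemma exists_card_filter_mem_orbit_lt [H.FiniteIndex] (U : Multiset G) (hU : U.card < H.index) :
    ∃ x : G, (U.filter fun u : G => (u : G ⧸ H) ∈ orbit H (x : G ⧸ H)).card <
      Nat.card (orbit H (x : G ⧸ H)) := by
  let _ : Fintype (G ⧸ H) := Fintype.ofFinite _
  let ω : G ⧸ H → orbitRel.Quotient H (G ⧸ H) := Quotient.mk _
  have hω : ∀ (x : G) (l : G ⧸ H), ω l = ω x ↔ l ∈ orbit H (x : G ⧸ H) := fun x l =>
    Quotient.eq.trans orbitRel_apply
  have h_left : ∑ o, (Finset.univ.filter fun l => ω l = o).card = H.index := by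
    rw [← Finset.card_eq_sum_card_fiberwise (fun l _ => Finset.mem_univ (ω l)), Finset.card_univ,
      index_eq_card, Nat.card_eq_fintype_card]
  have h_U : ∑ o, (U.filter fun u : G => ω u = o).card = U.card := by
    rw [← Multiset.card_map (fun u : G => ω u) U,
      ← Multiset.sum_count_eq_card fun _ _ => Finset.mem_univ _]
    simp only [Multiset.count_map, eq_comm]
  obtain ⟨o, -, ho⟩ := Finset.exists_lt_of_sum_lt (h_U.trans_lt (hU.trans_eq h_left.symm))
  induction o using Quotient.inductionOn with | _ l =>
  induction l using QuotientGroup.induction_on with | _ x =>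
  refine ⟨x, ?_⟩
  have h_orbit : Nat.card (orbit H (x : G ⧸ H)) = (Finset.univ.filter fun l => ω l = ω x).card := by
    rw [Nat.card_eq_fintype_card, Fintype.card_subtype]
    simp_rw [hω]
  simp_rw [h_orbit, ← hω]
  exact ho

theorem exists_mk_notMem_and_mk_inv_notMem [H.FiniteIndex] (U : Multiset G)
    (hU : U.card < H.index) :
    ∃ z : G, (z : G ⧸ H) ∉ U.map (fun u : G => (u : G ⧸ H)) ∧
      ((z⁻¹ : G) : G ⧸ H) ∉ U.map (fun u : G => ((u⁻¹ : G) : G ⧸ H)) := by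
  obtain ⟨x, hx⟩ := exists_card_filter_mem_orbit_lt H U hU
  obtain ⟨l, hl, hlU⟩ := U.exists_mem_notMem_map_of_card_filter_lt _ hx
  obtain ⟨r, hr, hrU⟩ := U.exists_mem_notMem_map_of_card_filter_lt
    (fun u : G => ((u⁻¹ : G) : G ⧸ H)) (s := orbit H ((x⁻¹ : G) : G ⧸ H))
    (by simpa only [inv_mem_orbit_mk_inv_iff, card_orbit_mk_inv] using hx)
  obtain ⟨z, rfl, rfl⟩ := exists_mk_eq_and_mk_inv_eq H hl hr
  exact ⟨z, hlU, hrU⟩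

end Subgroup

namespace NielsenEquiv

variable {G : Type*} [Group G]

@[refl] lemma refl (S : Multiset G) : NielsenEquiv S S := Relation.ReflTransGen.refl

lemma trans {S T U : Multiset G} (h₁ : NielsenEquiv S T) (h₂ : NielsenEquiv T U) :
    NielsenEquiv S U :=
  Relation.ReflTransGen.trans h₁ h₂

lemma cons_inv (a : G) (U : Multiset G) : NielsenEquiv (a ::ₘ U) (a⁻¹ ::ₘ U) :=
  .single <| .inl ⟨a, Multiset.mem_cons_self a U, by rw [Multiset.erase_cons_head]⟩

lemma cons_mul_left_of_mem {u : G} {U : Multiset G} (hu : u ∈ U) (a : G) :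
    NielsenEquiv (a ::ₘ U) (u * a ::ₘ U) :=
  .single <| .inr ⟨a, Multiset.mem_cons_self a U, u, by rwa [Multiset.erase_cons_head],
    .inl (by rw [Multiset.erase_cons_head])⟩

lemma cons_inv_mul_left_of_mem {u : G} {U : Multiset G} (hu : u ∈ U) (a : G) :
    NielsenEquiv (a ::ₘ U) (u⁻¹ * a ::ₘ U) := by
  obtain ⟨U', rfl⟩ := Multiset.exists_cons_of_mem hu
  have invert : NielsenEquiv (a ::ₘ u ::ₘ U') (a ::ₘ u⁻¹ ::ₘ U') := by
    rw [Multiset.cons_swap a, Multiset.cons_swap a]; exact cons_inv u _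
  have invert_back : NielsenEquiv (u⁻¹ * a ::ₘ u⁻¹ ::ₘ U') (u⁻¹ * a ::ₘ u ::ₘ U') := by
    rw [Multiset.cons_swap _ u⁻¹, Multiset.cons_swap _ u]
    simpa using cons_inv u⁻¹ (u⁻¹ * a ::ₘ U')
  exact (invert.trans (cons_mul_left_of_mem (Multiset.mem_cons_self _ _) a)).trans invert_back

lemma cons_mul_left {p : G} {U : Multiset G} (hp : p ∈ Subgroup.closure {x | x ∈ U}) (a : G) :
    NielsenEquiv (a ::ₘ U) (p * a ::ₘ U) := by
  induction hp using Subgroup.closure_induction'' generalizing a with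
  | mem u hu => exact cons_mul_left_of_mem hu a
  | inv_mem u hu => exact cons_inv_mul_left_of_mem hu a
  | one => rw [one_mul]
  | mul p q _ _ hp hq => rw [mul_assoc]; exact (hq a).trans (hp (q * a))

lemma cons_mul_right {p : G} {U : Multiset G} (hp : p ∈ Subgroup.closure {x | x ∈ U}) (a : G) :
    NielsenEquiv (a ::ₘ U) (a * p ::ₘ U) := by
  simpa using ((cons_inv a U).trans (cons_mul_left (inv_mem hp) a⁻¹)).trans
    (cons_inv (p⁻¹ * a⁻¹) U)

lemma _root_.NielsenMove.symm {S T : Multiset G} (h : NielsenMove S T) : NielsenEquiv T S := by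
  rcases h with ⟨g, hg, rfl⟩ | ⟨g, hg, h, hh, rfl | rfl⟩ <;>
    conv_rhs => rw [← Multiset.cons_erase hg]
  · simpa using cons_inv g⁻¹ (S.erase g)
  · simpa using cons_mul_left (inv_mem (Subgroup.subset_closure hh)) (h * g)
  · simpa using cons_mul_right (inv_mem (Subgroup.subset_closure hh)) (g * h)

lemma symm {S T : Multiset G} (h : NielsenEquiv S T) : NielsenEquiv T S := by
  induction h with
  | refl => rfl
  | tail _ hmove ih => exact hmove.symm.trans ih

lemma _root_.NielsenMove.card_eq {S T : Multiset G} (h : NielsenMove S T) : T.card = S.card := by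
  rcases h with ⟨g, hg, rfl⟩ | ⟨g, hg, h, hh, rfl | rfl⟩ <;>
    rw [Multiset.card_cons, ← Multiset.card_cons g, Multiset.cons_erase hg]

lemma card_eq {S T : Multiset G} (h : NielsenEquiv S T) : T.card = S.card := by
  induction h with
  | refl => rfl
  | tail _ hmove ih => rw [hmove.card_eq, ih]

lemma _root_.NielsenMove.closure_le {S T : Multiset G} (h : NielsenMove S T) :
    Subgroup.closure {x | x ∈ T} ≤ Subgroup.closure {x | x ∈ S} := by
  have mem : ∀ {x}, x ∈ S → x ∈ Subgroup.closure {x | x ∈ S} := fun hx => Subgroup.subset_closure hx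
  rw [Subgroup.closure_le]
  rcases h with ⟨g, hg, rfl⟩ | ⟨g, hg, h, hh, rfl | rfl⟩ <;> intro x hx <;>
    obtain rfl | hx := Multiset.mem_cons.1 hx
  all_goals first
    | exact mem (Multiset.mem_of_mem_erase hx)
    | exact inv_mem (mem hg)
    | exact mul_mem (mem (Multiset.mem_of_mem_erase hh)) (mem hg)
    | exact mul_mem (mem hg) (mem (Multiset.mem_of_mem_erase hh))

lemma closure_eq {S T : Multiset G} (h : NielsenEquiv S T) :
    Subgroup.closure {x | x ∈ S} = Subgroup.closure {x | x ∈ T} := by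
  have key : ∀ {S T : Multiset G}, NielsenEquiv S T →
      Subgroup.closure {x | x ∈ T} ≤ Subgroup.closure {x | x ∈ S} := by
    intro S T h
    induction h with
    | refl => rfl
    | tail _ hmove ih => exact hmove.closure_le.trans ih
  exact le_antisymm (key h.symm) (key h)

/-- Euclid's algorithm on exponents, run by Nielsen moves `a ↦ a * b ^ k`. -/
theorem exists_cons_cons_map_eq_one {K : Subgroup G} {C : Type*} [Group C] (f : K →* C) {c : C}
    (a b : K) {i j : ℤ} (ha : f a = c ^ i) (hb : f b = c ^ j) (U : Multiset G) :
    ∃ a' b' : K, NielsenEquiv ((a : G) ::ₘ (b : G) ::ₘ U) (a' ::ₘ b' ::ₘ U) ∧ f b' = 1 := by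
  induction hn : j.natAbs using Nat.strong_induction_on generalizing a b i j with
  | _ n ih =>
  by_cases hj : j = 0
  · exact ⟨a, b, refl _, by rw [hb, hj, zpow_zero]⟩
  have hr : f (a * b ^ (-(i / j))) = c ^ (i % j) := by
    rw [map_mul, map_zpow, ha, hb, ← zpow_mul, ← zpow_add, Int.emod_def]; ring_nf
  have hlt : (i % j).natAbs < n := by
    have := Int.emod_nonneg i hj; have := Int.emod_lt i hj; omega
  obtain ⟨a', b', hab, hb'⟩ := ih _ hlt b (a * b ^ (-(i / j))) hb hr rfl
  have hb_mem : (b : G) ∈ Subgroup.closure {x | x ∈ (b : G) ::ₘ U} :=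
    Subgroup.subset_closure (Multiset.mem_cons_self _ _)
  have step : NielsenEquiv ((a : G) ::ₘ (b : G) ::ₘ U)
      (((a * b ^ (-(i / j)) : K) : G) ::ₘ (b : G) ::ₘ U) := by
    push_cast
    exact cons_mul_right (zpow_mem hb_mem _) _
  rw [Multiset.cons_swap] at hab
  exact ⟨a', b', step.trans hab, hb'⟩

end NielsenEquiv

section Transversal

variable {G : Type*} [Group G] (H : Subgroup G)

lemma leftDistinct_cons {x : G} {S : Multiset G} :
    LeftDistinct H (x ::ₘ S) ↔
      (x : G ⧸ H) ∉ S.map (fun u : G => (u : G ⧸ H)) ∧ LeftDistinct H S := by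
  rw [LeftDistinct, Multiset.map_cons, Multiset.nodup_cons]; rfl

lemma rightDistinct_cons {x : G} {S : Multiset G} :
    RightDistinct H (x ::ₘ S) ↔
      ((x⁻¹ : G) : G ⧸ H) ∉ S.map (fun u : G => ((u⁻¹ : G) : G ⧸ H)) ∧ RightDistinct H S := by
  rw [RightDistinct, Multiset.map_cons, Multiset.nodup_cons]; rfl

lemma exists_le_distinct_card_eq_index [H.FiniteIndex] {S : Multiset G} (hL : LeftDistinct H S)
    (hR : RightDistinct H S) (hS : S.card ≤ H.index) :
    ∃ T, S ≤ T ∧ LeftDistinct H T ∧ RightDistinct H T ∧ T.card = H.index := by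
  obtain ⟨k, hk⟩ := Nat.exists_eq_add_of_le hS
  induction k generalizing S with
  | zero => exact ⟨S, le_rfl, hL, hR, hk.symm⟩
  | succ k ih =>
    obtain ⟨z, hzL, hzR⟩ := H.exists_mk_notMem_and_mk_inv_notMem S (by omega)
    obtain ⟨T, hle, hT⟩ := ih ((leftDistinct_cons H).2 ⟨hzL, hL⟩)
      ((rightDistinct_cons H).2 ⟨hzR, hR⟩) (by simp; omega) (by simp; omega)
    exact ⟨T, (Multiset.le_cons_self S z).trans hle, hT⟩

lemma isLeftTransversal_of_card_eq [H.FiniteIndex] {T : Multiset G} (hT : LeftDistinct H T)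
    (hcard : T.card = H.index) : IsLeftTransversal H {x | x ∈ T} :=
  fun _ => Multiset.existsUnique_of_nodup_map hT hcard.ge _

lemma isRightTransversal_of_card_eq [H.FiniteIndex] {T : Multiset G} (hT : RightDistinct H T)
    (hcard : T.card = H.index) : IsRightTransversal H {x | x ∈ T} :=
  fun _ => Multiset.existsUnique_of_nodup_map hT hcard.ge _

end Transversal

section Reduction

variable {G : Type*} [Group G] (H N : Subgroup G)

def IsCosetReduced (S : Multiset G) : Prop :=
  LeftDistinct H (S.filter (· ∉ H)) ∧ RightDistinct H (S.filter (· ∉ H)) ∧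
    (S.filter fun x => x ∈ H ∧ x ∉ N).card ≤ 1

noncomputable def cosetWeight (x : G) : ℕ := if x ∉ H then 2 else if x ∈ N then 0 else 1

variable {H N}

lemma cosetWeight_le_one {x : G} (hx : x ∈ H) : cosetWeight H N x ≤ 1 := by
  unfold cosetWeight; split_ifs <;> omega

lemma cosetWeight_of_notMem {x : G} (hx : x ∉ H) : cosetWeight H N x = 2 := if_pos hx

lemma cosetWeight_of_mem_of_notMem {x : G} (hxH : x ∈ H) (hxN : x ∉ N) :
    cosetWeight H N x = 1 := by
  simp [cosetWeight, hxH, hxN]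

lemma cosetWeight_of_mem_of_mem {x : G} (hxH : x ∈ H) (hxN : x ∈ N) :
    cosetWeight H N x = 0 := by
  simp [cosetWeight, hxH, hxN]

lemma exists_nielsenEquiv_cons_cons_mem {a b : G} (V : Multiset G)
    (h : (a : G ⧸ H) = b ∨ ((a⁻¹ : G) : G ⧸ H) = ((b⁻¹ : G) : G ⧸ H)) :
    ∃ c ∈ H, NielsenEquiv (a ::ₘ b ::ₘ V) (c ::ₘ a ::ₘ V) := by
  have ha : a ∈ Subgroup.closure {x | x ∈ a ::ₘ V} :=
    Subgroup.subset_closure (Multiset.mem_cons_self a V)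
  rw [Multiset.cons_swap]
  rcases h with h | h <;> rw [QuotientGroup.eq] at h
  · exact ⟨a⁻¹ * b, h, NielsenEquiv.cons_mul_left (inv_mem ha) b⟩
  · refine ⟨b * a⁻¹, by simpa using inv_mem h, NielsenEquiv.cons_mul_right (inv_mem ha) b⟩

lemma exists_nielsenEquiv_sum_cosetWeight_lt [(N.subgroupOf H).Normal]
    (hcyc : IsCyclic (H ⧸ N.subgroupOf H)) {S : Multiset G} (hS : ¬ IsCosetReduced H N S) :
    ∃ S', NielsenEquiv S S' ∧ (S'.map (cosetWeight H N)).sum < (S.map (cosetWeight H N)).sum := by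
  simp only [IsCosetReduced, LeftDistinct, RightDistinct, not_and_or, not_le] at hS
  obtain ⟨a, b, V, rfl, hb, hab⟩ | ⟨a, b, V, rfl, ⟨haH, haN⟩, hbH, hbN⟩ :
      (∃ a b V, S = a ::ₘ b ::ₘ V ∧ b ∉ H ∧
        ((a : G ⧸ H) = b ∨ ((a⁻¹ : G) : G ⧸ H) = ((b⁻¹ : G) : G ⧸ H))) ∨
      ∃ a b V, S = a ::ₘ b ::ₘ V ∧ (a ∈ H ∧ a ∉ N) ∧ (b ∈ H ∧ b ∉ N) := by
    rcases hS with hS | hS | hS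
    · obtain ⟨a, b, V, h, -, hb, hab⟩ := Multiset.exists_eq_cons_cons_of_not_nodup_map_filter hS
      exact .inl ⟨a, b, V, h, hb, .inl hab⟩
    · obtain ⟨a, b, V, h, -, hb, hab⟩ := Multiset.exists_eq_cons_cons_of_not_nodup_map_filter hS
      exact .inl ⟨a, b, V, h, hb, .inr hab⟩
    · exact .inr (Multiset.exists_eq_cons_cons_of_one_lt_card_filter hS)
  · obtain ⟨c, hc, hS'⟩ := exists_nielsenEquiv_cons_cons_mem V hab
    refine ⟨_, hS', ?_⟩
    have := cosetWeight_le_one (N := N) hc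
    simp only [Multiset.map_cons, Multiset.sum_cons, cosetWeight_of_notMem hb]
    omega
  · let f := QuotientGroup.mk' (N.subgroupOf H)
    obtain ⟨g, hg⟩ := hcyc.exists_generator
    obtain ⟨i, hi⟩ := Subgroup.mem_zpowers_iff.1 (hg (f ⟨a, haH⟩))
    obtain ⟨j, hj⟩ := Subgroup.mem_zpowers_iff.1 (hg (f ⟨b, hbH⟩))
    obtain ⟨a', b', hS', hb'⟩ :=
      NielsenEquiv.exists_cons_cons_map_eq_one f ⟨a, haH⟩ ⟨b, hbH⟩ hi.symm hj.symm V
    refine ⟨_, hS', ?_⟩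
    have hb'N : (b' : G) ∈ N := by
      rwa [QuotientGroup.mk'_apply, QuotientGroup.eq_one_iff, Subgroup.mem_subgroupOf] at hb'
    have := cosetWeight_le_one (N := N) a'.2
    simp only [Multiset.map_cons, Multiset.sum_cons, cosetWeight_of_mem_of_notMem haH haN,
      cosetWeight_of_mem_of_notMem hbH hbN, cosetWeight_of_mem_of_mem b'.2 hb'N]
    omega

lemma exists_nielsenEquiv_isCosetReduced [(N.subgroupOf H).Normal]
    (hcyc : IsCyclic (H ⧸ N.subgroupOf H)) (S : Multiset G) :
    ∃ S', NielsenEquiv S S' ∧ IsCosetReduced H N S' := by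
  induction hn : (S.map (cosetWeight H N)).sum using Nat.strong_induction_on generalizing S with
  | _ n ih =>
  by_cases hS : IsCosetReduced H N S
  · exact ⟨S, .refl S, hS⟩
  obtain ⟨S₁, hS₁, hlt⟩ := exists_nielsenEquiv_sum_cosetWeight_lt hcyc hS
  obtain ⟨S', hS', hred⟩ := ih _ (hn ▸ hlt) S₁ rfl
  exact ⟨S', hS₁.trans hS', hred⟩

lemma mk_mul_eq_and_mk_inv_eq [N.Normal] (hNH : N ≤ H) (z : G) {m : G} (hm : m ∈ N) :
    ((z * m : G) : G ⧸ H) = z ∧ (((z * m)⁻¹ : G) : G ⧸ H) = ((z⁻¹ : G) : G ⧸ H) := by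
  refine ⟨QuotientGroup.eq.2 ?_, QuotientGroup.eq.2 (hNH ?_)⟩
  · simpa using inv_mem (hNH hm)
  · simpa [mul_assoc] using ‹N.Normal›.conj_mem m hm z

/-- The elements of `W` generate `G` modulo `N`, so `e ↦ p * e` with `p ∈ ⟨W⟩` reaches every
coset of `N`. -/
lemma exists_nielsenEquiv_cons_fresh [H.FiniteIndex] [N.Normal] (hNH : N ≤ H) {e : G}
    {W : Multiset G} (he : e ∈ N) (hgen : Subgroup.closure {x | x ∈ e ::ₘ W} = ⊤)
    (hW : W.card < H.index) :
    ∃ x, NielsenEquiv (e ::ₘ W) (x ::ₘ W) ∧ (x : G ⧸ H) ∉ W.map (fun u : G => (u : G ⧸ H)) ∧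
      ((x⁻¹ : G) : G ⧸ H) ∉ W.map (fun u : G => ((u⁻¹ : G) : G ⧸ H)) := by
  obtain ⟨z, hzL, hzR⟩ := H.exists_mk_notMem_and_mk_inv_notMem W hW
  have hsup : Subgroup.closure {x | x ∈ W} ⊔ N = ⊤ := by
    refine eq_top_iff.2 (hgen ▸ (Subgroup.closure_le _).2 fun x hx => ?_)
    rcases Multiset.mem_cons.1 hx with rfl | hx
    · exact Subgroup.mem_sup_right he
    · exact Subgroup.mem_sup_left (Subgroup.subset_closure hx)
  obtain ⟨p, hp, n, hn, rfl⟩ := Subgroup.mem_sup_of_normal_right.1 (hsup ▸ Subgroup.mem_top z)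
  obtain ⟨hL, hR⟩ := mk_mul_eq_and_mk_inv_eq hNH (p * n) (mul_mem (inv_mem hn) he)
  refine ⟨p * e, NielsenEquiv.cons_mul_left hp e, ?_, ?_⟩
  · rwa [← mul_inv_cancel_left n e, ← mul_assoc, hL]
  · rwa [← mul_inv_cancel_left n e, ← mul_assoc, hR]

lemma IsCosetReduced.cons_of_fresh {e x : G} {W : Multiset G} (h : IsCosetReduced H N (e ::ₘ W))
    (heH : e ∈ H) (heN : e ∈ N) (hx : x ∉ H) (hxL : (x : G ⧸ H) ∉ W.map (fun u : G => (u : G ⧸ H)))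
    (hxR : ((x⁻¹ : G) : G ⧸ H) ∉ W.map (fun u : G => ((u⁻¹ : G) : G ⧸ H))) :
    IsCosetReduced H N (x ::ₘ W) := by
  obtain ⟨hL, hR, hHN⟩ := h
  have hout : (e ::ₘ W).filter (· ∉ H) = W.filter (· ∉ H) :=
    Multiset.filter_cons_of_neg _ (not_not.2 heH)
  have hout' : (x ::ₘ W).filter (· ∉ H) = x ::ₘ W.filter (· ∉ H) :=
    Multiset.filter_cons_of_pos _ hx
  have hsub : W.filter (· ∉ H) ⊆ W := Multiset.filter_subset _ W
  refine ⟨?_, ?_, ?_⟩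
  · rw [hout', leftDistinct_cons]
    exact ⟨fun hmem => hxL (Multiset.map_subset_map hsub hmem), hout ▸ hL⟩
  · rw [hout', rightDistinct_cons]
    exact ⟨fun hmem => hxR (Multiset.map_subset_map hsub hmem), hout ▸ hR⟩
  · rwa [Multiset.filter_cons_of_neg _ fun h => hx h.1,
      ← Multiset.filter_cons_of_neg _ fun h => h.2 heN]

lemma IsCosetReduced.leftDistinct_rightDistinct {S : Multiset G} (h : IsCosetReduced H N S)
    (hS : (S.filter (· ∈ H)).card ≤ 1) : LeftDistinct H S ∧ RightDistinct H S := by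
  refine ⟨Multiset.nodup_map_of_card_filter_le_one h.1 hS fun a b ha hb hab => hb ?_,
    Multiset.nodup_map_of_card_filter_le_one h.2.1 hS fun a b ha hb hab => hb ?_⟩
  · simpa using mul_mem ha (QuotientGroup.eq.1 hab)
  · simpa using mul_mem (inv_mem ha) (QuotientGroup.eq.1 hab)

lemma exists_nielsenEquiv_leftDistinct_rightDistinct [H.FiniteIndex] [N.Normal] (hNH : N ≤ H)
    {S : Multiset G} (hgen : Subgroup.closure {x | x ∈ S} = ⊤) (hcard : S.card ≤ H.index)
    (hS : IsCosetReduced H N S) :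
    ∃ S', NielsenEquiv S S' ∧ LeftDistinct H S' ∧ RightDistinct H S' := by
  induction hn : (S.filter (· ∈ H)).card using Nat.strong_induction_on generalizing S with
  | _ n ih =>
  by_cases h1 : (S.filter (· ∈ H)).card ≤ 1
  · exact ⟨S, .refl S, hS.leftDistinct_rightDistinct h1⟩
  obtain ⟨a, b, V, rfl, haH, hbH⟩ :=
    Multiset.exists_eq_cons_cons_of_one_lt_card_filter (not_le.1 h1)
  obtain ⟨e, o, heN, hoH, hS_eq⟩ : ∃ e o, e ∈ N ∧ o ∈ H ∧ a ::ₘ b ::ₘ V = e ::ₘ o ::ₘ V := by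
    by_cases haN : a ∈ N
    · exact ⟨a, b, haN, hbH, rfl⟩
    by_cases hbN : b ∈ N
    · exact ⟨b, a, hbN, haH, Multiset.cons_swap a b V⟩
    have := hS.2.2
    simp [Multiset.filter_cons_of_pos, haH, haN, hbH, hbN] at this
  rw [hS_eq] at hgen hcard hS hn
  obtain ⟨x, hx, hxL, hxR⟩ := exists_nielsenEquiv_cons_fresh hNH heN hgen (by simpa using hcard)
  have hxH : x ∉ H := fun hxH => hxL <| Multiset.mem_map.2
    ⟨o, Multiset.mem_cons_self o V, QuotientGroup.eq.2 (mul_mem (inv_mem hoH) hxH)⟩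
  have hlt : ((x ::ₘ o ::ₘ V).filter (· ∈ H)).card < n := by
    rw [← hn, Multiset.filter_cons_of_neg _ hxH, Multiset.filter_cons_of_pos _ (hNH heN),
      Multiset.card_cons]
    exact Nat.lt_succ_self _
  obtain ⟨S', hS', hdist⟩ := ih _ hlt (hx.closure_eq ▸ hgen) (hx.card_eq ▸ hcard)
    (hS.cons_of_fresh (hNH heN) heN hxH hxL hxR) rfl
  exact ⟨S', hS_eq ▸ hx.trans hS', hdist⟩

end Reduction

/-- for a group `G` with finite generating multiset `S` and a
finite-index subgroup `H` with `[G:H] ≥ |S|` such that `H / core_G(H)` is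
cyclic, `S` is Nielsen equivalent to a multiset contained in a left-right
transversal of `H` in `G`. -/
theorem stmt11 {G : Type*} [Group G] (H : Subgroup G) [H.FiniteIndex]
    (hcyc : IsCyclic (↥H ⧸ (H.normalCore.subgroupOf H)))
    (S : Multiset G) (hgen : Subgroup.closure {x : G | x ∈ S} = ⊤)
    (hcard : S.card ≤ H.index) :
    ∃ S' : Multiset G, NielsenEquiv S S' ∧
      ∃ T : Set G, IsLeftTransversal H T ∧ IsRightTransversal H T ∧ ∀ x ∈ S', x ∈ T := by
  obtain ⟨S₁, hS₁, hred⟩ := exists_nielsenEquiv_isCosetReduced hcyc S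
  obtain ⟨S₂, hS₂, hL, hR⟩ := exists_nielsenEquiv_leftDistinct_rightDistinct
    H.normalCore_le (hS₁.closure_eq ▸ hgen) (hS₁.card_eq ▸ hcard) hred
  obtain ⟨T, hle, hTL, hTR, hTcard⟩ :=
    exists_le_distinct_card_eq_index H hL hR ((hS₁.trans hS₂).card_eq ▸ hcard)
  exact ⟨S₂, hS₁.trans hS₂, {x | x ∈ T}, isLeftTransversal_of_card_eq H hTL hTcard,
    isRightTransversal_of_card_eq H hTR hTcard, fun x hx => Multiset.mem_of_le hle hx⟩
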